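/- Let k be a field, n ≥ 1, a_0,…,a_{n−1} ∈ k, and let V ⊆ Hk be the full set of solutions of ∂ⁿ(y) + Σ_{i=0}^{n−1} a_i·∂ⁱ(y) = 0. Then the group G(V|k) is commutative (abelian). -/

import Mathlib

/-!
The solution space `V` is finite-dimensional, since a solution is determined by its first `n`
coefficients, and `∂` restricts to an endomorphism `F` of `V` with which every `σ ∈ G(V|k)`
commutes. The functional `ε : y ↦ y 0` satisfies `ε (Fᵐ y) = y m`, so the functionals `ε ∘ Fᵐ`
separate the points of `V`. Hence `ε` is a cyclic vector for the transpose of `F`: the functionals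
`ε ∘ p(F)`, `p ∈ k[X]`, exhaust the dual of `V`. Writing `ε ∘ σ = ε ∘ p(F)` and using that `σ`
commutes with `F` gives `σ = p(F)`, and a polynomial in `F` commutes with every `τ` that
commutes with `F`.
-/

open scoped BigOperators

set_option linter.unusedSectionVars false

/-- The ring of Hurwitz series over `R`: all sequences `ℕ → R`, with termwise addition and
the Hurwitz (binomial-convolution) product. -/
def HS (R : Type*) : Type _ := ℕ → R

namespace HS

variable {R : Type*} [CommRing R]

instance : AddCommGroup (HS R) := Pi.addCommGroup

instance {S : Type*} [Semiring S] [Module S R] : Module S (HS R) :=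
  Pi.module ℕ (fun _ => R) S

@[simp] theorem add_apply (a b : HS R) (n : ℕ) : (a + b) n = a n + b n := rfl
@[simp] theorem zero_apply (n : ℕ) : (0 : HS R) n = 0 := rfl
@[simp] theorem smul_apply {S : Type*} [Semiring S] [Module S R] (c : S) (a : HS R) (n : ℕ) :
    (c • a) n = c • a n := rfl

instance : Mul (HS R) :=
  ⟨fun a b n => ∑ j ∈ Finset.range (n + 1), (n.choose j : R) * a j * b (n - j)⟩

theorem mul_apply (a b : HS R) (n : ℕ) :
    (a * b) n = ∑ j ∈ Finset.range (n + 1), (n.choose j : R) * a j * b (n - j) := rfl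

instance : One (HS R) := ⟨fun n => if n = 0 then 1 else 0⟩

theorem one_apply (n : ℕ) : (1 : HS R) n = if n = 0 then 1 else 0 := rfl

private theorem hmul_comm (a b : HS R) : a * b = b * a := by
  funext n
  rw [mul_apply, mul_apply, ← Finset.sum_range_reflect]
  refine Finset.sum_congr rfl fun j hj => ?_
  have hj' : j ≤ n := Nat.lt_succ_iff.mp (Finset.mem_range.mp hj)
  have h1 : n + 1 - 1 - j = n - j := by omega
  rw [h1, Nat.choose_symm hj', Nat.sub_sub_self hj']
  ring

private theorem hone_mul (a : HS R) : 1 * a = a := by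
  funext n
  rw [mul_apply]
  rw [Finset.sum_eq_single 0]
  · simp [one_apply]
  · intro j hj hj0
    simp [one_apply, hj0]
  · intro h
    exact absurd (Finset.mem_range.mpr (Nat.succ_pos n)) h

private theorem hmul_assoc (a b c : HS R) : a * b * c = a * (b * c) := by
  funext n
  rw [mul_apply, mul_apply]
  simp_rw [mul_apply, Finset.mul_sum]
  simp_rw [Finset.sum_mul]
  rw [Finset.sum_sigma', Finset.sum_sigma']
  refine Finset.sum_nbij' (fun x => ⟨x.2, x.1 - x.2⟩) (fun x => ⟨x.1 + x.2, x.1⟩)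
    ?_ ?_ ?_ ?_ ?_
  · rintro ⟨p, i⟩ h
    simp only [Finset.mem_sigma, Finset.mem_range] at h ⊢
    omega
  · rintro ⟨i, j⟩ h
    simp only [Finset.mem_sigma, Finset.mem_range] at h ⊢
    omega
  · rintro ⟨p, i⟩ h
    simp only [Finset.mem_sigma, Finset.mem_range] at h
    dsimp only
    exact congrArg (fun m => (⟨m, i⟩ : Σ _ : ℕ, ℕ)) (by omega)
  · rintro ⟨i, j⟩ h
    simp only [Finset.mem_sigma, Finset.mem_range] at h
    dsimp only
    exact congrArg (fun m => (⟨i, m⟩ : Σ _ : ℕ, ℕ)) (by omega)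
  · rintro ⟨p, i⟩ h
    simp only [Finset.mem_sigma, Finset.mem_range] at h
    have hip : i ≤ p := by omega
    have hpn : p ≤ n := by omega
    have h2 : n - i - (p - i) = n - p := by omega
    have h3 : (n.choose p : R) * (p.choose i : R)
        = (n.choose i : R) * ((n - i).choose (p - i) : R) := by
      rw [← Nat.cast_mul, ← Nat.cast_mul, Nat.choose_mul (n := n) hip]
    simp only [h2]
    calc ((n.choose p : R) * ((p.choose i : R) * a i * b (p - i)) * c (n - p))
        = ((n.choose p : R) * (p.choose i : R)) * (a i * b (p - i) * c (n - p)) := by ring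
      _ = ((n.choose i : R) * ((n - i).choose (p - i) : R)) * (a i * b (p - i) * c (n - p)) := by
          rw [h3]
      _ = (n.choose i : R) * a i * (((n - i).choose (p - i) : R) * b (p - i) * c (n - p)) := by
          ring

instance : CommRing (HS R) :=
  { (inferInstance : AddCommGroup (HS R)) with
    mul := (· * ·)
    one := (1 : HS R)
    mul_assoc := hmul_assoc
    one_mul := hone_mul
    mul_one := fun a => by rw [hmul_comm]; exact hone_mul a
    left_distrib := fun a b c => by
      funext n
      simp only [mul_apply, add_apply]
      rw [← Finset.sum_add_distrib]
      exact Finset.sum_congr rfl fun j _ => by ring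
    right_distrib := fun a b c => by
      funext n
      simp only [mul_apply, add_apply]
      rw [← Finset.sum_add_distrib]
      exact Finset.sum_congr rfl fun j _ => by ring
    zero_mul := fun a => by funext n; simp [mul_apply]
    mul_zero := fun a => by funext n; simp [mul_apply]
    mul_comm := hmul_comm }

/-- The derivation `∂` on Hurwitz series: the left-shift. -/
def D (a : HS R) : HS R := fun n => a (n + 1)

@[simp] theorem D_apply (a : HS R) (n : ℕ) : D a n = a (n + 1) := rfl

/-- The exponential `exp β = (1, β, β², …)`. -/
def hexp (b : R) : HS R := fun n => b ^ n

@[simp] theorem hexp_apply (b : R) (n : ℕ) : hexp b n = b ^ n := rfl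

/-- The divided power `x^{[i]}`: the sequence with `1` in position `i` and `0` elsewhere. -/
def dpow (i : ℕ) : HS R := fun n => if n = i then 1 else 0

/-- The constant Hurwitz series `(r, 0, 0, …)`. -/
def const (r : R) : HS R := fun n => if n = 0 then r else 0

/-- Entrywise map of a Hurwitz series along a map of coefficients. -/
def map {K L : Type*} (f : K → L) (a : HS K) : HS L := fun n => f (a n)

/-- `σ` is a differential automorphism of the subspace `V` of `HS k`:
a `k`-linear automorphism of `V` commuting with the derivation `D`. -/
def IsDiffAut {k : Type*} [Field k] (V : Submodule k (HS k)) (σ : V ≃ₗ[k] V) : Prop :=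
  ∀ v w : V, (w : HS k) = D (v : HS k) → (σ w : HS k) = D (σ v : HS k)

end HS

/-- The nilpotent upper Jordan block of size `m` (ones on the superdiagonal). -/
def jordanBlock (k : Type*) [Field k] (m : ℕ) : Matrix (Fin m) (Fin m) k :=
  Matrix.of fun i j => if (i : ℕ) + 1 = (j : ℕ) then 1 else 0

/-- The centralizer of a matrix `A` inside `GL(m, k)`, as a set of matrices. -/
def matCent {k : Type*} [Field k] {m : ℕ} (A : Matrix (Fin m) (Fin m) k) :
    Set (Matrix (Fin m) (Fin m) k) :=
  {T | IsUnit T ∧ A * T = T * A}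

/-- The group `U(m, k)` of upper triangular matrices in `GL(m, k)` with all diagonal
entries equal to `1`, as a set of matrices. -/
def uniUpper (k : Type*) [Field k] (m : ℕ) : Set (Matrix (Fin m) (Fin m) k) :=
  {T | IsUnit T ∧ (∀ i, T i i = 1) ∧ ∀ i j : Fin m, (j : ℕ) < (i : ℕ) → T i j = 0}

namespace Module.End

open Polynomial

variable {K V : Type*} [Field K] [AddCommGroup V] [Module K V] [FiniteDimensional K V]

theorem exists_eq_aeval_of_commute_of_separating (f : Module.End K V) (φ : Module.Dual K V)
    (hφ : ∀ x, (∀ m : ℕ, φ ((f ^ m) x) = 0) → x = 0) {g : Module.End K V} (hg : Commute f g) :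
    ∃ p : K[X], g = aeval f p := by
  -- `T p = φ ∘ p(f)`; the common kernel of its range is trivial, so the range is the whole dual.
  let T : K[X] →ₗ[K] Module.Dual K V := LinearMap.llcomp K V V K φ ∘ₗ (aeval f).toLinearMap
  have hT : LinearMap.range T = ⊤ := by
    rw [← Subspace.dualCoannihilator_dualAnnihilator_eq (W := LinearMap.range T),
      ← Submodule.dualAnnihilator_bot]
    congr 1
    refine (Submodule.eq_bot_iff _).2 fun x hx => hφ x fun m => ?_
    exact (Submodule.mem_dualCoannihilator x).1 hx (φ ∘ₗ f ^ m) ⟨X ^ m, by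
      rw [LinearMap.comp_apply, AlgHom.toLinearMap_apply, map_pow, aeval_X]; rfl⟩
  obtain ⟨p, hp⟩ : φ ∘ₗ g ∈ LinearMap.range T := hT ▸ Submodule.mem_top
  refine ⟨p, LinearMap.ext fun x => sub_eq_zero.1 (hφ _ fun m => ?_)⟩
  have hpf : Commute (aeval f p) f := aeval_eq_smeval f p ▸ smeval_commute_left K p (.refl f)
  have hφp := LinearMap.congr_fun hp ((f ^ m) x)
  simp only [T, LinearMap.comp_apply, AlgHom.toLinearMap_apply, LinearMap.llcomp_apply] at hφp
  rw [map_sub, map_sub, ← Module.End.mul_apply, ← Module.End.mul_apply, (hg.pow_left m).eq,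
    (hpf.pow_right m).eq.symm, Module.End.mul_apply, Module.End.mul_apply, hφp, sub_self]

theorem commute_of_commute_of_separating (f : Module.End K V) (φ : Module.Dual K V)
    (hφ : ∀ x, (∀ m : ℕ, φ ((f ^ m) x) = 0) → x = 0) {g h : Module.End K V}
    (hg : Commute f g) (hh : Commute f h) : Commute g h := by
  obtain ⟨p, rfl⟩ := exists_eq_aeval_of_commute_of_separating f φ hφ hg
  exact aeval_eq_smeval f p ▸ smeval_commute_left K p hh

end Module.End

namespace HS

variable {R : Type*} [CommRing R]

def Dₗ : HS R →ₗ[R] HS R where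
  toFun := D
  map_add' _ _ := rfl
  map_smul' _ _ := rfl

def coeffₗ (m : ℕ) : HS R →ₗ[R] R where
  toFun a := a m
  map_add' _ _ := rfl
  map_smul' _ _ := rfl

theorem sum_apply {ι : Type*} (s : Finset ι) (f : ι → HS R) (m : ℕ) :
    (∑ i ∈ s, f i) m = ∑ i ∈ s, f i m :=
  map_sum (coeffₗ m) f s

theorem iterate_D_apply (y : HS R) (j m : ℕ) : (D^[j] y) m = y (m + j) := by
  induction j generalizing y with
  | zero => rfl
  | succ j ih => rw [Function.iterate_succ_apply, ih]; rfl

theorem const_mul_apply (r : R) (w : HS R) (m : ℕ) : (const r * w) m = r * w m := by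
  rw [mul_apply, Finset.sum_eq_single 0 (fun j _ hj => by simp [const, hj]) (by simp)]
  simp [const]

def diffOp {n : ℕ} (a : Fin n → R) (y : HS R) : HS R :=
  D^[n] y + ∑ i : Fin n, const (a i) * D^[(i : ℕ)] y

theorem diffOp_apply {n : ℕ} (a : Fin n → R) (y : HS R) (m : ℕ) :
    diffOp a y m = y (m + n) + ∑ i : Fin n, a i * y (m + i) := by
  simp only [diffOp, add_apply, sum_apply, const_mul_apply, iterate_D_apply]

theorem diffOp_D {n : ℕ} (a : Fin n → R) (y : HS R) : diffOp a (D y) = D (diffOp a y) := by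
  funext m
  simp only [diffOp_apply, D_apply, Nat.add_right_comm]

theorem eq_zero_of_diffOp_eq_zero {n : ℕ} {a : Fin n → R} {y : HS R} (hy : diffOp a y = 0)
    (hinit : ∀ j < n, y j = 0) : y = 0 := by
  funext m
  induction m using Nat.strong_induction_on with
  | _ m ih =>
    obtain hm | hm := lt_or_ge m n
    · exact hinit m hm
    · have hrec := diffOp_apply a y (m - n)
      rw [hy, Nat.sub_add_cancel hm, Finset.sum_eq_zero fun i _ => by
        rw [ih _ (by omega), zero_apply, mul_zero]] at hrec
      simpa using hrec.symm

section SolutionSpace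

variable {k : Type*} [Field k] {n : ℕ} {a : Fin n → k} {V : Submodule k (HS k)}

theorem D_mem_of_diffOp (hV : ∀ y, y ∈ V ↔ diffOp a y = 0) {y : HS k} (hy : y ∈ V) :
    D y ∈ V := by
  rw [hV, diffOp_D, (hV y).1 hy]
  rfl

theorem finiteDimensional_of_diffOp (hV : ∀ y, y ∈ V ↔ diffOp a y = 0) :
    FiniteDimensional k V := by
  let init : V →ₗ[k] Fin n → k := LinearMap.pi fun i => coeffₗ i ∘ₗ V.subtype
  refine FiniteDimensional.of_injective init ((injective_iff_map_eq_zero _).2 fun v hv => ?_)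
  refine Subtype.ext (eq_zero_of_diffOp_eq_zero ((hV v).1 v.2) fun j hj => ?_)
  exact congr_fun hv ⟨j, hj⟩

def restrictD (hV : ∀ y, y ∈ V ↔ diffOp a y = 0) : Module.End k V :=
  Dₗ.restrict fun _ => D_mem_of_diffOp hV

theorem coe_restrictD_pow_apply (hV : ∀ y, y ∈ V ↔ diffOp a y = 0) (m : ℕ) (v : V) :
    ((restrictD hV ^ m) v : HS k) = D^[m] (v : HS k) := by
  induction m generalizing v with
  | zero => rfl
  | succ m ih => rw [pow_succ, Module.End.mul_apply, ih, Function.iterate_succ_apply]; rfl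

theorem IsDiffAut.commute (hV : ∀ y, y ∈ V ↔ diffOp a y = 0) {σ : V ≃ₗ[k] V}
    (hσ : IsDiffAut V σ) :
    Commute (restrictD hV) (σ : Module.End k V) :=
  LinearMap.ext fun v => Subtype.ext (hσ v _ rfl).symm

end SolutionSpace

end HS

theorem stmt_17_general {k : Type*} [Field k] (n : ℕ) (a : Fin n → k)
    (V : Submodule k (HS k))
    (hV : (V : Set (HS k)) =
      {y : HS k | HS.D^[n] y + ∑ i : Fin n, HS.const (a i) * HS.D^[(i : ℕ)] y = 0}) :
    ∀ σ τ : V ≃ₗ[k] V, HS.IsDiffAut V σ → HS.IsDiffAut V τ →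
      ∀ v : V, σ (τ v) = τ (σ v) := by
  intro σ τ hσ hτ v
  have hmem (y : HS k) : y ∈ V ↔ HS.diffOp a y = 0 := Set.ext_iff.1 hV y
  have := HS.finiteDimensional_of_diffOp hmem
  have hsep : ∀ y : V, (∀ m : ℕ, (HS.coeffₗ 0 ∘ₗ V.subtype)
      ((HS.restrictD hmem ^ m) y) = 0) → y = 0 := by
    refine fun y hy => Subtype.ext (funext fun m => ?_)
    simpa [HS.coeffₗ, HS.coe_restrictD_pow_apply, HS.iterate_D_apply] using hy m
  exact LinearMap.congr_fun (Module.End.commute_of_commute_of_separating _ _ hsep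
    (hσ.commute hmem) (hτ.commute hmem)).eq v

/-- the group of differential automorphisms of the full solution space of a
monic linear homogeneous differential equation with constant coefficients is commutative. -/
theorem stmt_17 {k : Type*} [Field k] (n : ℕ) (hn : 1 ≤ n) (a : Fin n → k)
    (V : Submodule k (HS k))
    (hV : (V : Set (HS k)) =
      {y : HS k | HS.D^[n] y + ∑ i : Fin n, HS.const (a i) * HS.D^[(i : ℕ)] y = 0}) :
    ∀ σ τ : V ≃ₗ[k] V, HS.IsDiffAut V σ → HS.IsDiffAut V τ →
      ∀ v : V, σ (τ v) = τ (σ v) :=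
  stmt_17_general n a V hV
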